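/- Let d > 1 and c > 0, and let δ be a real random variable with E[δ] = 0 such that ‖δ‖_p := (E[|δ|^p])^{1/p} ≤ c·p^{1/d} for every p ≥ 1. Then there exists a constant c₂ > 0, depending only on c and d, such that for every λ ∈ ℝ, E[exp(λδ)] ≤ exp( c₂·( λ² + |λ|^{d/(d−1)} ) ). -/

import Mathlib

open MeasureTheory Real
open scoped ENNReal Nat


lemma my_exp_taylor2 (y : ℝ) : Real.exp y ≤ 1 + y + y ^ 2 * Real.exp |y| := by
  have h1 : Real.exp y * (1 - y) ≤ 1 := by
    have h := Real.add_one_le_exp (-y)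
    calc Real.exp y * (1 - y) ≤ Real.exp y * Real.exp (-y) := by
          apply mul_le_mul_of_nonneg_left (by linarith) (Real.exp_pos y).le
      _ = 1 := by rw [← Real.exp_add]; simp
  rcases le_or_gt 0 y with hy | hy
  · rw [abs_of_nonneg hy]
    nlinarith [Real.exp_pos y, mul_le_mul_of_nonneg_left h1 hy]
  · rw [abs_of_neg hy]
    have hF : 1 + (-y) + (-y) ^ 2 / 2 ≤ Real.exp (-y) := Real.quadratic_le_exp_of_nonneg (by linarith)
    have hF' : 1 - y + y ^ 2 / 2 ≤ Real.exp (-y) := by nlinarith [hF]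
    have hEF : Real.exp y * Real.exp (-y) = 1 := by rw [← Real.exp_add]; simp
    have hone : (1:ℝ) ≤ Real.exp (-y) := Real.one_le_exp (by linarith)
    have hP : (0:ℝ) < 1 - y + y ^ 2 / 2 := by nlinarith [sq_nonneg (y - 1)]
    have hA : Real.exp y * (1 - y + y ^ 2 / 2) ≤ 1 := by
      calc Real.exp y * (1 - y + y ^ 2 / 2) ≤ Real.exp y * Real.exp (-y) :=
            mul_le_mul_of_nonneg_left hF' (Real.exp_pos y).le
        _ = 1 := hEF
    have hE : Real.exp y ≤ 1 + y + y ^ 2 / 2 := by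
      nlinarith [hA, hP, sq_nonneg (y ^ 2), Real.exp_pos y]
    nlinarith [hE, hone, sq_nonneg y]

lemma my_young {d : ℝ} (hd : 1 < d) {a : ℝ} (ha : 0 < a) :
    ∃ K : ℝ, 0 < K ∧ ∀ l x : ℝ, |l| * |x| ≤ a * |x| ^ d + K * |l| ^ (d / (d - 1)) := by
  have hpq : d.HolderConjugate (d / (d - 1)) :=
    (Real.holderConjugate_iff_eq_conjExponent hd).2 rfl
  set t : ℝ := (a * d) ^ (1 / d) with ht
  have had : 0 < a * d := by positivity
  have htpos : 0 < t := Real.rpow_pos_of_pos had _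
  have hd' : 1 ≤ d / (d - 1) := by
    rw [le_div_iff₀ (by linarith)]; linarith
  refine ⟨(t ^ (d / (d - 1)))⁻¹, by positivity, fun l x => ?_⟩
  have key := Real.young_inequality_of_nonneg
    (mul_nonneg htpos.le (abs_nonneg x)) (div_nonneg (abs_nonneg l) htpos.le) hpq
  have h1 : (t * |x|) ^ d = (a * d) * |x| ^ d := by
    rw [Real.mul_rpow htpos.le (abs_nonneg x), ht, ← Real.rpow_mul had.le,
      one_div, inv_mul_cancel₀ (by linarith : d ≠ 0), Real.rpow_one]
  have h2 : (|l| / t) ^ (d / (d - 1)) = |l| ^ (d / (d - 1)) * (t ^ (d / (d - 1)))⁻¹ := by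
    rw [Real.div_rpow (abs_nonneg l) htpos.le, div_eq_mul_inv]
  have h3 : t * |x| * (|l| / t) = |l| * |x| := by
    field_simp
  rw [h3, h1, h2] at key
  have h4 : a * d * |x| ^ d / d = a * |x| ^ d := by
    field_simp
  rw [h4] at key
  have h5 : |l| ^ (d / (d - 1)) * (t ^ (d / (d - 1)))⁻¹ / (d / (d - 1))
      ≤ (t ^ (d / (d - 1)))⁻¹ * |l| ^ (d / (d - 1)) := by
    rw [div_le_iff₀ (by linarith : (0:ℝ) < d / (d-1))]
    have h6 : (0:ℝ) ≤ (t ^ (d / (d - 1)))⁻¹ * |l| ^ (d / (d - 1)) := by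
      positivity
    nlinarith [h6]
  linarith

lemma my_sq_le {d : ℝ} (hd : 1 < d) {b : ℝ} (hb : 0 < b) (x : ℝ) (hx : 0 ≤ x) :
    x ^ 2 ≤ (1 + 4 / b ^ 2) * Real.exp (b * x ^ d) := by
  have hE1 : (1:ℝ) ≤ Real.exp (b * x ^ d) := Real.one_le_exp (by positivity)
  have h0 : x ^ 2 ≤ 1 + (x ^ d) ^ 2 := by
    rcases le_or_gt x 1 with h | h
    · nlinarith [sq_nonneg (x ^ d), sq_nonneg x, hx]
    · have : x ≤ x ^ d := by
        calc x = x ^ (1:ℝ) := (Real.rpow_one x).symm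
          _ ≤ x ^ d := Real.rpow_le_rpow_of_exponent_le h.le hd.le
      nlinarith [Real.rpow_nonneg hx d]
  have h1 : b / 2 * x ^ d ≤ Real.exp (b / 2 * x ^ d) := by
    have := Real.add_one_le_exp (b / 2 * x ^ d)
    linarith
  have h2 : x ^ d ≤ 2 / b * Real.exp (b / 2 * x ^ d) := by
    calc x ^ d = 2 / b * (b / 2 * x ^ d) := by field_simp
      _ ≤ 2 / b * Real.exp (b / 2 * x ^ d) := by
          apply mul_le_mul_of_nonneg_left h1 (by positivity)
  have h3 : (x ^ d) ^ 2 ≤ 4 / b ^ 2 * Real.exp (b * x ^ d) := by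
    have hEE : Real.exp (b / 2 * x ^ d) * Real.exp (b / 2 * x ^ d) = Real.exp (b * x ^ d) := by
      rw [← Real.exp_add]; ring_nf
    have := mul_le_mul h2 h2 (Real.rpow_nonneg hx d) (by positivity)
    calc (x ^ d) ^ 2 = x ^ d * x ^ d := sq (x ^ d) ▸ by ring
      _ ≤ 2 / b * Real.exp (b / 2 * x ^ d) * (2 / b * Real.exp (b / 2 * x ^ d)) := this
      _ = 4 / b ^ 2 * (Real.exp (b / 2 * x ^ d) * Real.exp (b / 2 * x ^ d)) := by ring
      _ = 4 / b ^ 2 * Real.exp (b * x ^ d) := by rw [hEE]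
  nlinarith [h0, h3, hE1, sq_nonneg b]

lemma my_exp_moment {Ω : Type} [MeasurableSpace Ω] (μ : Measure Ω) [IsProbabilityMeasure μ]
    {c d : ℝ} (hc : 0 < c) (hd : 1 < d) (δ : Ω → ℝ) (hδ : AEMeasurable δ μ)
    (Hmom : ∀ p : ℝ, 1 ≤ p → (∫⁻ ω, ENNReal.ofReal (|δ ω| ^ p) ∂μ)
        ≤ ENNReal.ofReal ((c * p ^ (1 / d)) ^ p))
    {s : ℝ} (hs : 0 < s) (hs2 : s * (c ^ d * (d * Real.exp 1)) ≤ 1 / 2) :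
    (∫⁻ ω, ENNReal.ofReal (Real.exp (s * |δ ω| ^ d)) ∂μ) ≤ 2 := by
  have hd0 : (0:ℝ) < d := by linarith
  have key : ∀ x : ℝ, ENNReal.ofReal (Real.exp (s * |x| ^ d))
      = ∑' n : ℕ, ENNReal.ofReal ((s * |x| ^ d) ^ n / (n ! : ℝ)) := by
    intro x
    rw [Real.exp_eq_exp_ℝ, NormedSpace.exp_eq_tsum_div]
    exact ENNReal.ofReal_tsum_of_nonneg (fun n => by positivity)
      (Real.summable_pow_div_factorial _)
  have hterm : ∀ (n : ℕ) (x : ℝ),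
      (s * |x| ^ d) ^ n / (n ! : ℝ) = s ^ n / (n ! : ℝ) * |x| ^ (d * (n:ℝ)) := by
    intro n x
    rw [mul_pow, ← Real.rpow_natCast (|x| ^ d) n, ← Real.rpow_mul (abs_nonneg x)]
    ring
  have term_bound : ∀ n : ℕ,
      (∫⁻ ω, ENNReal.ofReal ((s * |δ ω| ^ d) ^ n / (n ! : ℝ)) ∂μ)
        ≤ ENNReal.ofReal ((1/2 : ℝ) ^ n) := by
    intro n
    rcases Nat.eq_zero_or_pos n with rfl | hn
    · simp
    · have hp1 : (1:ℝ) ≤ d * (n:ℝ) := by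
        have : (1:ℝ) ≤ (n:ℝ) := by exact_mod_cast hn
        nlinarith
      simp_rw [hterm n, ENNReal.ofReal_mul (by positivity : (0:ℝ) ≤ s ^ n / (n ! : ℝ))]
      rw [lintegral_const_mul' _ _ ENNReal.ofReal_ne_top]
      calc ENNReal.ofReal (s ^ n / (n ! : ℝ)) * ∫⁻ ω, ENNReal.ofReal (|δ ω| ^ (d * (n:ℝ))) ∂μ
          ≤ ENNReal.ofReal (s ^ n / (n ! : ℝ))
              * ENNReal.ofReal ((c * (d * (n:ℝ)) ^ (1 / d)) ^ (d * (n:ℝ))) := by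
            exact mul_le_mul_right (Hmom _ hp1) _
        _ = ENNReal.ofReal (s ^ n / (n ! : ℝ) * (c * (d * (n:ℝ)) ^ (1 / d)) ^ (d * (n:ℝ))) := by
            rw [← ENNReal.ofReal_mul (by positivity)]
        _ ≤ ENNReal.ofReal ((1/2 : ℝ) ^ n) := by
            apply ENNReal.ofReal_le_ofReal
            have hpn : (0:ℝ) < d * (n:ℝ) := by
              have : (0:ℝ) < (n:ℝ) := by exact_mod_cast hn
              positivity
            have e1 : (c * (d * (n:ℝ)) ^ (1 / d)) ^ (d * (n:ℝ))
                = c ^ (d * (n:ℝ)) * (d * (n:ℝ)) ^ ((1/d) * (d * (n:ℝ))) := by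
              rw [Real.mul_rpow hc.le (Real.rpow_nonneg hpn.le _),
                ← Real.rpow_mul hpn.le]
            have e2 : (1/d) * (d * (n:ℝ)) = (n:ℝ) := by field_simp
            have e3 : c ^ (d * (n:ℝ)) = (c ^ d) ^ n := by
              rw [Real.rpow_mul hc.le, Real.rpow_natCast]
            have e4 : (d * (n:ℝ)) ^ ((n:ℝ)) = (d * (n:ℝ)) ^ n := Real.rpow_natCast _ n
            rw [e1, e2, e3, e4]
            have hfac : ((n:ℝ)) ^ n / (n ! : ℝ) ≤ Real.exp 1 ^ n := by
              have h := Real.pow_div_factorial_le_exp (x := (n:ℝ)) (Nat.cast_nonneg n) n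
              calc ((n:ℝ)) ^ n / (n ! : ℝ) ≤ Real.exp (n:ℝ) := h
                _ = Real.exp 1 ^ n := by
                  rw [← Real.exp_nat_mul]; norm_num
            have expand : s ^ n / (n ! : ℝ) * ((c ^ d) ^ n * (d * (n:ℝ)) ^ n)
                = (s * (c ^ d * d)) ^ n * ((n:ℝ) ^ n / (n ! : ℝ)) := by
              rw [mul_pow, mul_pow, mul_pow]
              field_simp
            rw [expand]
            calc (s * (c ^ d * d)) ^ n * ((n:ℝ) ^ n / (n ! : ℝ))
                ≤ (s * (c ^ d * d)) ^ n * Real.exp 1 ^ n := by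
                  apply mul_le_mul_of_nonneg_left hfac (by positivity)
              _ = (s * (c ^ d * (d * Real.exp 1))) ^ n := by rw [← mul_pow]; ring_nf
              _ ≤ (1/2 : ℝ) ^ n := by
                  apply pow_le_pow_left₀ (by positivity) hs2
  calc (∫⁻ ω, ENNReal.ofReal (Real.exp (s * |δ ω| ^ d)) ∂μ)
      = ∫⁻ ω, ∑' n : ℕ, ENNReal.ofReal ((s * |δ ω| ^ d) ^ n / (n ! : ℝ)) ∂μ := by
        simp_rw [key]
    _ = ∑' n : ℕ, ∫⁻ ω, ENNReal.ofReal ((s * |δ ω| ^ d) ^ n / (n ! : ℝ)) ∂μ :=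
        lintegral_tsum (fun n => by fun_prop)
    _ ≤ ∑' n : ℕ, ENNReal.ofReal ((1/2 : ℝ) ^ n) := ENNReal.tsum_le_tsum term_bound
    _ = ENNReal.ofReal (∑' n : ℕ, (1/2 : ℝ) ^ n) :=
        (ENNReal.ofReal_tsum_of_nonneg (fun n => by positivity)
          (summable_geometric_of_lt_one (by norm_num) (by norm_num))).symm
    _ = 2 := by
        rw [tsum_geometric_of_lt_one (by norm_num) (by norm_num)]
        norm_num


set_option maxHeartbeats 1000000 in
/-- If `d > 1`, `c > 0`, `δ` is centered and
`‖δ‖_p = (E[|δ|^p])^{1/p} ≤ c p^{1/d}` for every `p ≥ 1`, then there is a constant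
`c₂ > 0`, depending only on `c` and `d`, such that for every `λ ∈ ℝ`,
`E[exp(λ δ)] ≤ exp(c₂ (λ² + |λ|^{d/(d-1)}))`. -/
theorem moment_estimate_to_mgf_estimate (c d : ℝ) (hc : 0 < c) (hd : 1 < d) :
    ∃ c₂ : ℝ, 0 < c₂ ∧
      ∀ (Ω : Type) [MeasurableSpace Ω] (μ : Measure Ω), IsProbabilityMeasure μ →
        ∀ δ : Ω → ℝ, AEMeasurable δ μ →
          (∫ ω, δ ω ∂μ) = 0 →
          (∀ p : ℝ, 1 ≤ p →
            (∫⁻ ω, ENNReal.ofReal (|δ ω| ^ p) ∂μ) ^ (1 / p)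
              ≤ ENNReal.ofReal (c * p ^ (1 / d))) →
          ∀ l : ℝ,
            (∫⁻ ω, ENNReal.ofReal (Real.exp (l * δ ω)) ∂μ)
              ≤ ENNReal.ofReal (Real.exp (c₂ * (l ^ 2 + |l| ^ (d / (d - 1))))) := by
  have hd0 : (0:ℝ) < d := by linarith
  have hd1 : (0:ℝ) < d - 1 := by linarith
  have hcd : (0:ℝ) < c ^ d := Real.rpow_pos_of_pos hc d
  have hX : (0:ℝ) < c ^ d * (d * Real.exp 1) := by positivity
  set s : ℝ := (4 * (c ^ d * (d * Real.exp 1)))⁻¹ with hs_def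
  have hs : 0 < s := by rw [hs_def]; positivity
  have hs2 : s * (c ^ d * (d * Real.exp 1)) ≤ 1 / 2 := by
    rw [hs_def]
    rw [inv_mul_eq_div, div_le_div_iff₀ (by positivity) (by norm_num)]
    nlinarith [hX]
  obtain ⟨K₁, hK₁, hY₁⟩ := my_young hd hs
  obtain ⟨K₂, hK₂, hY₂⟩ := my_young hd (half_pos hs)
  set A : ℝ := 1 + 4 / (s / 2) ^ 2 with hA_def
  have hA : 0 < A := by rw [hA_def]; positivity
  set c₂ : ℝ := 1 + K₁ + 2 * (A * Real.exp K₂) with hc₂_def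
  have hc₂ : 0 < c₂ := by rw [hc₂_def]; positivity
  refine ⟨c₂, hc₂, ?_⟩
  intro Ω _ μ hμ δ hδ hcent H l
  haveI := hμ
  -- moment bounds in non-normalized form
  have Hmom : ∀ p : ℝ, 1 ≤ p → (∫⁻ ω, ENNReal.ofReal (|δ ω| ^ p) ∂μ)
      ≤ ENNReal.ofReal ((c * p ^ (1 / d)) ^ p) := by
    intro p hp
    have hp0 : (0:ℝ) < p := by linarith
    have h := ENNReal.rpow_le_rpow (H p hp) hp0.le
    rwa [← ENNReal.rpow_mul, one_div, inv_mul_cancel₀ hp0.ne', ENNReal.rpow_one,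
      ENNReal.ofReal_rpow_of_nonneg (by positivity) hp0.le] at h
  have hI2 : (∫⁻ ω, ENNReal.ofReal (Real.exp (s * |δ ω| ^ d)) ∂μ) ≤ 2 :=
    my_exp_moment μ hc hd δ hδ Hmom hs hs2
  have hd'0 : (0:ℝ) ≤ d / (d - 1) := by positivity
  have habs_nonneg : (0:ℝ) ≤ |l| ^ (d / (d - 1)) := Real.rpow_nonneg (abs_nonneg l) _
  rcases le_or_gt |l| 1 with hl | hl
  -- small |l|
  · set C : ℝ := l ^ 2 * (A * Real.exp K₂) with hC_def
    have hC : 0 ≤ C := by rw [hC_def]; positivity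
    set g : Ω → ℝ := fun ω => 1 + l * δ ω + C * Real.exp (s * |δ ω| ^ d) with hg_def
    have hg : ∀ ω, Real.exp (l * δ ω) ≤ g ω := by
      intro ω
      set x : ℝ := δ ω with hx_def
      have h1 : Real.exp (l * x) ≤ 1 + l * x + (l * x) ^ 2 * Real.exp |l * x| :=
        my_exp_taylor2 (l * x)
      have h2 : |l * x| ≤ s / 2 * |x| ^ d + K₂ := by
        have := hY₂ l x
        have hle1 : |l| ^ (d / (d - 1)) ≤ 1 :=
          Real.rpow_le_one (abs_nonneg l) hl hd'0
        have : |l| * |x| ≤ s / 2 * |x| ^ d + K₂ * 1 := by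
          nlinarith [hY₂ l x, mul_le_mul_of_nonneg_left hle1 hK₂.le]
        rw [abs_mul]; linarith
      have h3 : x ^ 2 ≤ A * Real.exp (s / 2 * |x| ^ d) := by
        have := my_sq_le hd (half_pos hs) |x| (abs_nonneg x)
        calc x ^ 2 = |x| ^ 2 := (sq_abs x).symm
          _ ≤ A * Real.exp (s / 2 * |x| ^ d) := this
      have h4 : (l * x) ^ 2 * Real.exp |l * x| ≤ C * Real.exp (s * |δ ω| ^ d) := by
        have e1 : Real.exp |l * x| ≤ Real.exp (s / 2 * |x| ^ d) * Real.exp K₂ := by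
          rw [← Real.exp_add]
          exact Real.exp_le_exp.2 h2
        have e2 : (l * x) ^ 2 = l ^ 2 * x ^ 2 := by ring
        have e3 : Real.exp (s / 2 * |x| ^ d) * Real.exp (s / 2 * |x| ^ d)
            = Real.exp (s * |x| ^ d) := by
          rw [← Real.exp_add]; ring_nf
        calc (l * x) ^ 2 * Real.exp |l * x|
            ≤ (l * x) ^ 2 * (Real.exp (s / 2 * |x| ^ d) * Real.exp K₂) := by
              apply mul_le_mul_of_nonneg_left e1 (sq_nonneg _)
          _ = l ^ 2 * (x ^ 2 * Real.exp (s / 2 * |x| ^ d)) * Real.exp K₂ := by ring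
          _ ≤ l ^ 2 * (A * Real.exp (s / 2 * |x| ^ d) * Real.exp (s / 2 * |x| ^ d))
                * Real.exp K₂ := by
              apply mul_le_mul_of_nonneg_right _ (Real.exp_pos K₂).le
              apply mul_le_mul_of_nonneg_left _ (sq_nonneg l)
              apply mul_le_mul_of_nonneg_right h3 (Real.exp_pos _).le
          _ = C * Real.exp (s * |x| ^ d) := by rw [mul_assoc A, e3, hC_def]; ring
      calc Real.exp (l * x) ≤ 1 + l * x + (l * x) ^ 2 * Real.exp |l * x| := h1
        _ ≤ 1 + l * x + C * Real.exp (s * |δ ω| ^ d) := by linarith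
        _ = g ω := rfl
    have hg_nonneg : ∀ ω, 0 ≤ g ω := fun ω => (Real.exp_pos _).le.trans (hg ω)
    -- integrability
    have hδ_int : Integrable δ μ := by
      refine ⟨hδ.aestronglyMeasurable, ?_⟩
      rw [HasFiniteIntegral]
      have h1 : (∫⁻ ω, ‖δ ω‖ₑ ∂μ) = ∫⁻ ω, ENNReal.ofReal (|δ ω| ^ (1:ℝ)) ∂μ := by
        congr 1; funext ω
        rw [Real.rpow_one, Real.enorm_eq_ofReal_abs]
      rw [h1]
      exact lt_of_le_of_lt (Hmom 1 le_rfl) ENNReal.ofReal_lt_top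
    have hh_int : Integrable (fun ω => Real.exp (s * |δ ω| ^ d)) μ := by
      have hm : AEMeasurable (fun ω => Real.exp (s * |δ ω| ^ d)) μ := by fun_prop
      refine ⟨hm.aestronglyMeasurable, ?_⟩
      rw [HasFiniteIntegral]
      have h1 : (∫⁻ ω, ‖Real.exp (s * |δ ω| ^ d)‖ₑ ∂μ)
          = ∫⁻ ω, ENNReal.ofReal (Real.exp (s * |δ ω| ^ d)) ∂μ := by
        congr 1; funext ω
        rw [Real.enorm_eq_ofReal (Real.exp_pos _).le]
      rw [h1]
      exact lt_of_le_of_lt hI2 (by norm_num)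
    have hg_int : Integrable g μ := by
      refine Integrable.add (Integrable.add (integrable_const 1) ?_) ?_
      · exact hδ_int.const_mul l
      · exact hh_int.const_mul C
    -- integral of g
    have hh_le : (∫ ω, Real.exp (s * |δ ω| ^ d) ∂μ) ≤ 2 := by
      have := ofReal_integral_eq_lintegral_ofReal hh_int
        (Filter.Eventually.of_forall fun ω => (Real.exp_pos _).le)
      have h2 : ENNReal.ofReal (∫ ω, Real.exp (s * |δ ω| ^ d) ∂μ) ≤ ENNReal.ofReal 2 := by
        rw [this]; simpa using hI2
      exact (ENNReal.ofReal_le_ofReal_iff (by norm_num)).mp h2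
    have hgint_eq : (∫ ω, g ω ∂μ) ≤ 1 + 2 * C := by
      have hint1 : Integrable (fun ω => 1 + l * δ ω) μ :=
        (integrable_const 1).add (hδ_int.const_mul l)
      have e1 : (∫ ω, g ω ∂μ)
          = (∫ ω, (1 + l * δ ω) ∂μ) + ∫ ω, C * Real.exp (s * |δ ω| ^ d) ∂μ :=
        integral_add hint1 (hh_int.const_mul C)
      have e2 : (∫ ω, (1 + l * δ ω) ∂μ) = 1 := by
        rw [integral_add (integrable_const 1) (hδ_int.const_mul l),
          integral_const, integral_const_mul, hcent]
        simp
      rw [e1, e2, integral_const_mul]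
      have : C * (∫ ω, Real.exp (s * |δ ω| ^ d) ∂μ) ≤ C * 2 :=
        mul_le_mul_of_nonneg_left hh_le hC
      linarith
    -- conclude
    calc (∫⁻ ω, ENNReal.ofReal (Real.exp (l * δ ω)) ∂μ)
        ≤ ∫⁻ ω, ENNReal.ofReal (g ω) ∂μ :=
          lintegral_mono fun ω => ENNReal.ofReal_le_ofReal (hg ω)
      _ = ENNReal.ofReal (∫ ω, g ω ∂μ) :=
          (ofReal_integral_eq_lintegral_ofReal hg_int
            (Filter.Eventually.of_forall hg_nonneg)).symm
      _ ≤ ENNReal.ofReal (Real.exp (c₂ * (l ^ 2 + |l| ^ (d / (d - 1))))) := by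
          apply ENNReal.ofReal_le_ofReal
          have h1 : (∫ ω, g ω ∂μ) ≤ 1 + 2 * C := hgint_eq
          have h2 : 1 + 2 * C ≤ Real.exp (2 * C) := by
            have := Real.add_one_le_exp (2 * C); linarith
          have h3 : 2 * C ≤ c₂ * (l ^ 2 + |l| ^ (d / (d - 1))) := by
            rw [hC_def, hc₂_def]
            nlinarith [sq_nonneg l, habs_nonneg, hK₁, hA, Real.exp_pos K₂,
              mul_nonneg (sq_nonneg l) habs_nonneg,
              mul_nonneg (mul_nonneg hA.le (Real.exp_pos K₂).le) habs_nonneg]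
          calc (∫ ω, g ω ∂μ) ≤ 1 + 2 * C := h1
            _ ≤ Real.exp (2 * C) := h2
            _ ≤ Real.exp (c₂ * (l ^ 2 + |l| ^ (d / (d - 1)))) := Real.exp_le_exp.2 h3
  -- large |l|
  · have hpt : ∀ ω, ENNReal.ofReal (Real.exp (l * δ ω))
        ≤ ENNReal.ofReal (Real.exp (K₁ * |l| ^ (d / (d - 1))))
          * ENNReal.ofReal (Real.exp (s * |δ ω| ^ d)) := by
      intro ω
      rw [← ENNReal.ofReal_mul (Real.exp_pos _).le, ← Real.exp_add]
      apply ENNReal.ofReal_le_ofReal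
      apply Real.exp_le_exp.2
      have h1 : l * δ ω ≤ |l| * |δ ω| := by
        calc l * δ ω ≤ |l * δ ω| := le_abs_self _
          _ = |l| * |δ ω| := abs_mul _ _
      have := hY₁ l (δ ω)
      linarith
    calc (∫⁻ ω, ENNReal.ofReal (Real.exp (l * δ ω)) ∂μ)
        ≤ ∫⁻ ω, ENNReal.ofReal (Real.exp (K₁ * |l| ^ (d / (d - 1))))
            * ENNReal.ofReal (Real.exp (s * |δ ω| ^ d)) ∂μ := lintegral_mono hpt
      _ = ENNReal.ofReal (Real.exp (K₁ * |l| ^ (d / (d - 1))))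
            * ∫⁻ ω, ENNReal.ofReal (Real.exp (s * |δ ω| ^ d)) ∂μ :=
          lintegral_const_mul' _ _ ENNReal.ofReal_ne_top
      _ ≤ ENNReal.ofReal (Real.exp (K₁ * |l| ^ (d / (d - 1)))) * 2 :=
          mul_le_mul_right hI2 _
      _ ≤ ENNReal.ofReal (Real.exp (c₂ * (l ^ 2 + |l| ^ (d / (d - 1))))) := by
          rw [show (2:ℝ≥0∞) = ENNReal.ofReal 2 by norm_num,
            ← ENNReal.ofReal_mul (Real.exp_pos _).le]
          apply ENNReal.ofReal_le_ofReal
          have h2 : (2:ℝ) ≤ Real.exp (l ^ 2) := by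
            have he : (1:ℝ) + 1 ≤ Real.exp 1 := Real.add_one_le_exp 1
            have hl2 : (1:ℝ) ≤ l ^ 2 := by nlinarith [sq_abs l]
            calc (2:ℝ) ≤ Real.exp 1 := by linarith
              _ ≤ Real.exp (l ^ 2) := Real.exp_le_exp.2 hl2
          calc Real.exp (K₁ * |l| ^ (d / (d - 1))) * 2
              ≤ Real.exp (K₁ * |l| ^ (d / (d - 1))) * Real.exp (l ^ 2) := by
                apply mul_le_mul_of_nonneg_left h2 (Real.exp_pos _).le
            _ = Real.exp (K₁ * |l| ^ (d / (d - 1)) + l ^ 2) := by rw [← Real.exp_add]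
            _ ≤ Real.exp (c₂ * (l ^ 2 + |l| ^ (d / (d - 1)))) := by
                apply Real.exp_le_exp.2
                have expand : c₂ * (l ^ 2 + |l| ^ (d / (d - 1)))
                    = l ^ 2 + K₁ * |l| ^ (d / (d - 1))
                      + ((K₁ + 2 * (A * Real.exp K₂)) * l ^ 2
                        + (1 + 2 * (A * Real.exp K₂)) * |l| ^ (d / (d - 1))) := by
                  rw [hc₂_def]; ring
                have t1 : 0 ≤ (K₁ + 2 * (A * Real.exp K₂)) * l ^ 2 :=
                  mul_nonneg (by positivity) (sq_nonneg l)
                have t2 : 0 ≤ (1 + 2 * (A * Real.exp K₂)) * |l| ^ (d / (d - 1)) :=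
                  mul_nonneg (by positivity) habs_nonneg
                rw [expand]; clear_value s A c₂; linarith
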